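/- arXiv:1305.4101 — 3 statements merged into one kernel-verified Lean document; each statement's English description precedes it below -/
import Mathlib

section
/- Let x, y, z be complex numbers satisfying the triangle inequalities ||x| − |y|| ≤ |z| ≤ |x| + |y|. Then there exist real numbers α₁ and α₂ such that x·e^{iα₁} + y·e^{iα₂} = z. -/
/-!
Multiplying by unit complex numbers reduces the equation to its real form
`a e^{iθ₁} + b e^{iθ₂} = c` with `a = ‖x‖`, `b = ‖y‖`, `c = ‖z‖`. As `θ` runs over `[0, π]`,
`‖c - a e^{iθ}‖` runs continuously from `|c - a|` to `c + a`, so by the intermediate value theorem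
it takes the value `b` for some `θ₁`; then `c - a e^{iθ₁} = b e^{iθ₂}` with `θ₂` its argument.
-/

open Complex

theorem exists_norm_ofReal_sub_ofReal_mul_exp_eq {a b c : ℝ} (ha : 0 ≤ a) (hc : 0 ≤ c)
    (h₁ : |c - a| ≤ b) (h₂ : b ≤ c + a) :
    ∃ θ : ℝ, ‖(c : ℂ) - a * exp (θ * I)‖ = b := by
  set f : ℝ → ℝ := fun θ ↦ ‖(c : ℂ) - a * exp (θ * I)‖
  have hf₀ : f 0 = |c - a| := by simp [f, ← ofReal_sub, norm_real]
  have hfπ : f Real.pi = c + a := by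
    simp only [f, exp_pi_mul_I]
    rw [show (c : ℂ) - a * -1 = ((c + a : ℝ) : ℂ) by push_cast; ring, norm_real,
      Real.norm_of_nonneg (by positivity)]
  have hf : ContinuousOn f (Set.Icc 0 Real.pi) := by fun_prop
  obtain ⟨θ, -, hθ⟩ := intermediate_value_Icc Real.pi_pos.le hf ⟨hf₀ ▸ h₁, hfπ ▸ h₂⟩
  exact ⟨θ, hθ⟩

theorem exists_ofReal_mul_exp_add_ofReal_mul_exp_eq {a b c : ℝ}
    (h₁ : |a - b| ≤ c) (h₂ : c ≤ a + b) :
    ∃ θ₁ θ₂ : ℝ, a * exp (θ₁ * I) + b * exp (θ₂ * I) = c := by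
  obtain ⟨h₁l, h₁r⟩ := abs_le.mp h₁
  have hb : 0 ≤ b := by linarith [le_abs_self (a - b)]
  obtain ⟨θ, hθ⟩ := exists_norm_ofReal_sub_ofReal_mul_exp_eq (a := a) (b := b) (c := c)
    (by linarith) (by linarith) (abs_le.mpr ⟨by linarith, by linarith⟩) (by linarith)
  refine ⟨θ, arg ((c : ℂ) - a * exp (θ * I)), ?_⟩
  rw [← hθ, norm_mul_exp_arg_mul_I]
  ring

theorem mul_exp_sub_arg_mul_I (x : ℂ) (θ : ℝ) :
    x * exp ((θ - arg x : ℝ) * I) = ‖x‖ * exp (θ * I) := by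
  nth_rw 1 [← norm_mul_exp_arg_mul_I x]
  rw [mul_assoc, ← exp_add]
  push_cast
  ring_nf

/-- If `||x| - |y|| ≤ |z| ≤ |x| + |y|`, then the triangle equation
`x·e^{iα₁} + y·e^{iα₂} = z` has a solution in real numbers `α₁, α₂`. -/
theorem triangle_equation_solvable (x y z : ℂ)
    (h1 : |‖x‖ - ‖y‖| ≤ ‖z‖)
    (h2 : ‖z‖ ≤ ‖x‖ + ‖y‖) :
    ∃ α₁ α₂ : ℝ,
      x * Complex.exp (Complex.I * (α₁ : ℂ)) + y * Complex.exp (Complex.I * (α₂ : ℂ)) = z := by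
  obtain ⟨θ₁, θ₂, h⟩ := exists_ofReal_mul_exp_add_ofReal_mul_exp_eq h1 h2
  refine ⟨θ₁ - arg x + arg z, θ₂ - arg y + arg z, ?_⟩
  have hexp (θ φ : ℝ) : exp (I * (θ + φ : ℝ)) = exp (θ * I) * exp (φ * I) := by
    rw [← exp_add]; push_cast; ring_nf
  calc x * exp (I * (θ₁ - arg x + arg z : ℝ)) + y * exp (I * (θ₂ - arg y + arg z : ℝ))
      = (‖x‖ * exp (θ₁ * I) + ‖y‖ * exp (θ₂ * I)) * exp (arg z * I) := by
        rw [hexp, hexp, ← mul_assoc, ← mul_assoc, mul_exp_sub_arg_mul_I,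
          mul_exp_sub_arg_mul_I]
        ring
    _ = z := by rw [h, norm_mul_exp_arg_mul_I]
end

section
/- Let x, y, z be nonzero complex numbers with strict triangle inequalities ||x| − |y|| < |z| < |x| + |y|. Then the set of pairs of unit complex numbers (u, v) with x·u + y·v = z has exactly two elements; i.e., the triangle equation x·e^{iα₁} + y·e^{iα₂} = z has exactly two solutions up to the identification (α₁, α₂) ↦ (e^{iα₁}, e^{iα₂}). -/
/-!
With `t = x u / z` the equation forces `v = z (1 - t) / y`, so solutions correspond to the points
`t` with `|t| = |x| / |z|` and `|1 - t| = |y| / |z|`, the intersection of two circles centred at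
`0` and `1`. Subtracting the two circle equations fixes `Re t`, and the strict triangle
inequalities make the remaining value of `(Im t)²` positive, which leaves exactly two points.
-/

namespace Complex

theorem encard_setOf_re_eq_and_im_sq_eq {p c : ℝ} (hc : 0 < c) :
    {t : ℂ | t.re = p ∧ t.im ^ 2 = c}.encard = 2 := by
  obtain ⟨q, hq, rfl⟩ : ∃ q : ℝ, 0 < q ∧ q ^ 2 = c :=
    ⟨√c, Real.sqrt_pos.2 hc, Real.sq_sqrt hc.le⟩
  have hset : {t : ℂ | t.re = p ∧ t.im ^ 2 = q ^ 2} = {⟨p, q⟩, ⟨p, -q⟩} := by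
    ext t
    simp only [Set.mem_ofPred_eq, Set.mem_insert_iff, Set.mem_singleton_iff, Complex.ext_iff,
      sq_eq_sq_iff_eq_or_eq_neg, and_or_left]
  rw [hset]
  refine Set.encard_pair fun h ↦ ?_
  have : q = -q := congrArg im h
  linarith

theorem norm_eq_and_norm_one_sub_eq_iff {r s : ℝ} (hr : 0 ≤ r) (hs : 0 ≤ s) (t : ℂ) :
    ‖t‖ = r ∧ ‖1 - t‖ = s ↔
      t.re = (1 + r ^ 2 - s ^ 2) / 2 ∧ t.im ^ 2 = r ^ 2 - ((1 + r ^ 2 - s ^ 2) / 2) ^ 2 := by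
  rw [← sq_eq_sq₀ (norm_nonneg _) hr, ← sq_eq_sq₀ (norm_nonneg _) hs, Complex.sq_norm,
    Complex.sq_norm, normSq_apply, normSq_apply, sub_re, sub_im, one_re, one_im]
  constructor
  · rintro ⟨ht, h1t⟩
    exact ⟨by linarith, by nlinarith⟩
  · rintro ⟨hre, him⟩
    exact ⟨by nlinarith, by nlinarith⟩

theorem encard_setOf_norm_eq_and_norm_one_sub_eq {r s : ℝ} (hrs : |r - s| < 1)
    (hrs' : 1 < r + s) : {t : ℂ | ‖t‖ = r ∧ ‖1 - t‖ = s}.encard = 2 := by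
  obtain ⟨h₁, h₂⟩ := abs_lt.mp hrs
  simp only [norm_eq_and_norm_one_sub_eq_iff (by linarith : 0 ≤ r) (by linarith : 0 ≤ s)]
  apply encard_setOf_re_eq_and_im_sq_eq
  -- `4 r² - (1 + r² - s²)² = (s² - (1 - r)²) ((1 + r)² - s²)`
  nlinarith [mul_pos (by nlinarith : 0 < s ^ 2 - (1 - r) ^ 2)
    (by nlinarith : 0 < (1 + r) ^ 2 - s ^ 2)]

theorem setOf_unit_solutions_eq_image {x y z : ℂ} (hx : x ≠ 0) (hy : y ≠ 0) (hz : z ≠ 0) :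
    {p : ℂ × ℂ | ‖p.1‖ = 1 ∧ ‖p.2‖ = 1 ∧ x * p.1 + y * p.2 = z} =
      (fun t ↦ (z * t / x, z * (1 - t) / y)) ''
        {t | ‖t‖ = ‖x‖ / ‖z‖ ∧ ‖1 - t‖ = ‖y‖ / ‖z‖} := by
  ext ⟨u, v⟩
  simp only [Set.mem_ofPred_eq, Set.mem_image, Prod.mk.injEq]
  constructor
  · rintro ⟨hu, hv, huv⟩
    have h1 : 1 - x * u / z = y * v / z := by field_simp; linear_combination -huv
    refine ⟨x * u / z, ⟨?_, ?_⟩, by field_simp, ?_⟩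
    · simp [hu]
    · simp [h1, hv]
    · rw [h1]; field_simp
  · rintro ⟨t, ⟨ht, h1t⟩, rfl, rfl⟩
    refine ⟨?_, ?_, by field_simp; ring⟩
    · rw [norm_div, norm_mul, ht]; field_simp
    · rw [norm_div, norm_mul, h1t]; field_simp

end Complex

/-- For nonzero `x, y, z` with strict triangle inequalities
`||x| - |y|| < |z| < |x| + |y|`, the triangle equation `x·u + y·v = z` has exactly two
solutions in pairs of unit complex numbers `(u, v)`. -/
theorem triangle_equation_two_solutions (x y z : ℂ)
    (hx : x ≠ 0) (hy : y ≠ 0) (hz : z ≠ 0)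
    (h1 : |‖x‖ - ‖y‖| < ‖z‖)
    (h2 : ‖z‖ < ‖x‖ + ‖y‖) :
    {p : ℂ × ℂ | ‖p.1‖ = 1 ∧ ‖p.2‖ = 1 ∧
      x * p.1 + y * p.2 = z}.encard = 2 := by
  have hz' : 0 < ‖z‖ := norm_pos_iff.2 hz
  have hinj : (fun t ↦ (z * t / x, z * (1 - t) / y)).Injective := fun t t' h ↦ by
    simpa [hx, hz] using congrArg Prod.fst h
  rw [Complex.setOf_unit_solutions_eq_image hx hy hz, hinj.encard_image]
  apply Complex.encard_setOf_norm_eq_and_norm_one_sub_eq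
  · rwa [← sub_div, abs_div, abs_norm, div_lt_one hz']
  · rwa [← add_div, one_lt_div hz']
end

section
/- Let N be an even natural number and a : {-N/2, ..., N/2−1} → ℂ, and let b_j = (1/(2N−1)) Σ_{k=−(N−1)}^{N−1} |F(k)|² e^{−2πi jk/(2N−1)} where F(k) = Σ_{l=−N/2}^{N/2−1} a_l e^{2πi lk/(2N−1)}. Then for every m with 0 ≤ m ≤ N−1, b_{N−1−m} = Σ_{i=0}^{m} conj(a_{−N/2+i}) · a_{N/2−1−m+i}; in particular b_{N−1} = conj(a_{−N/2}) · a_{N/2−1}. Equivalently, the vector (b_{N−1}, b_{N−2}, ..., b_0)ᵀ equals 𝒜·ā, where 𝒜 is the N×N lower-triangular Toeplitz matrix with first column (conj(a_{−N/2}), conj(a_{−N/2+1}), ..., conj(a_{N/2−1}))ᵀ and ā = (a_{N/2−1}, a_{N/2−2}, ..., a_{−N/2})ᵀ. -/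
/-!
Expanding `|F k|²` as a double sum over `l, l'` and summing over the `2N - 1` frequencies `k`,
orthogonality of the `(2N-1)`-th roots of unity keeps exactly the pairs with
`l - l' ≡ j (mod 2N-1)`. The zero padding makes every `l - l' - j` smaller than `2N - 1` in absolute
value, so the congruence is the equality `l = l' + j`: `b j` is the aperiodic autocorrelation
`∑ conj (a l') * a (l' + j)`, which for `j = N - 1 - m` has `m + 1` terms.
-/

open Finset Complex ComplexConjugate

lemma Int.sum_Ico_add_natCast {β : Type*} [AddCommMonoid β] (f : ℤ → β) (c : ℤ) (n : ℕ) :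
    ∑ k ∈ Ico c (c + n), f k = ∑ i ∈ Finset.range n, f (c + i) := by
  simp [Int.Ico_eq_finset_map, sum_map]

lemma sum_Ico_exp_eq_ite_dvd {M : ℕ} (hM : M ≠ 0) (c d : ℤ) :
    ∑ k ∈ Ico c (c + M), exp (2 * Real.pi * I * d * k / M) =
      if (M : ℤ) ∣ d then (M : ℂ) else 0 := by
  have hω := isPrimitiveRoot_exp M hM
  set ζ := exp (2 * Real.pi * I / M) ^ d with hζ
  have hζ0 : ζ ≠ 0 := zpow_ne_zero _ (exp_ne_zero _)
  have hterm : ∀ i : ℕ, exp (2 * Real.pi * I * d * (c + i : ℤ) / M) = ζ ^ c * ζ ^ i := by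
    intro i
    rw [← zpow_natCast, ← zpow_add₀ hζ0, hζ, ← zpow_mul, ← exp_int_mul]
    push_cast
    ring_nf
  rw [Int.sum_Ico_add_natCast, sum_congr rfl fun i _ => hterm i, ← mul_sum]
  split_ifs with hd
  · have : ζ = 1 := (hω.zpow_eq_one_iff_dvd d).2 hd
    simp [this]
  · have hζ1 : ζ ≠ 1 := fun h => hd ((hω.zpow_eq_one_iff_dvd d).1 h)
    have hζM : ζ ^ M = 1 := by
      rw [hζ, ← zpow_natCast, ← zpow_mul, mul_comm d, zpow_mul, zpow_natCast, hω.pow_eq_one, one_zpow]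
    rw [geom_sum_eq hζ1, hζM, sub_self, zero_div, mul_zero]

noncomputable def dft (M : ℕ) (S : Finset ℤ) (a : ℤ → ℂ) (k : ℤ) : ℂ :=
  ∑ l ∈ S, a l * exp (2 * Real.pi * I * l * k / M)

lemma sq_norm_dft (M : ℕ) (S : Finset ℤ) (a : ℤ → ℂ) (k : ℤ) :
    (‖dft M S a k‖ : ℂ) ^ 2 =
      ∑ l ∈ S, ∑ l' ∈ S, a l * conj (a l') * exp (2 * Real.pi * I * (l - l' : ℤ) * k / M) := by
  rw [← ofReal_pow, Complex.sq_norm, ← mul_conj, dft, map_sum, sum_mul_sum]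
  refine sum_congr rfl fun l _ => sum_congr rfl fun l' _ => ?_
  rw [map_mul, ← exp_conj, mul_mul_mul_comm, ← exp_add]
  congr 2
  simp [map_ofNat]
  ring

lemma one_div_mul_sum_sq_norm_dft_mul_exp {M : ℕ} (hM : M ≠ 0) (S : Finset ℤ) (a : ℤ → ℂ)
    (c j : ℤ) :
    1 / (M : ℂ) * ∑ k ∈ Ico c (c + M),
        (‖dft M S a k‖ : ℂ) ^ 2 * exp (-(2 * Real.pi * I * j * k) / M) =
      ∑ l ∈ S, ∑ l' ∈ S, if (M : ℤ) ∣ l - l' - j then a l * conj (a l') else 0 := by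
  have hmerge : ∀ k l l' : ℤ, a l * conj (a l') * exp (2 * Real.pi * I * (l - l' : ℤ) * k / M) *
      exp (-(2 * Real.pi * I * j * k) / M) =
        a l * conj (a l') * exp (2 * Real.pi * I * (l - l' - j : ℤ) * k / M) := by
    intro k l l'
    rw [mul_assoc, ← exp_add]
    push_cast
    ring_nf
  simp_rw [sq_norm_dft, sum_mul, hmerge]
  rw [sum_comm, mul_sum]
  refine sum_congr rfl fun l _ => ?_
  rw [sum_comm, mul_sum]
  refine sum_congr rfl fun l' _ => ?_
  rw [← mul_sum, sum_Ico_exp_eq_ite_dvd hM]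
  split_ifs
  · field_simp
  · rw [mul_zero, mul_zero]

lemma sum_sum_ite_dvd_sub_sub_eq_sum_filter {β : Type*} [AddCommMonoid β] {M : ℕ}
    (S : Finset ℤ) (j : ℤ) (hS : ∀ l ∈ S, ∀ l' ∈ S, |l - l' - j| < M) (f : ℤ → ℤ → β) :
    ∑ l ∈ S, ∑ l' ∈ S, (if (M : ℤ) ∣ l - l' - j then f l l' else 0) =
      ∑ l' ∈ S with l' + j ∈ S, f (l' + j) l' := by
  rw [sum_comm, sum_filter]
  refine sum_congr rfl fun l' hl' => ?_
  have hiff : ∀ l ∈ S, (M : ℤ) ∣ l - l' - j ↔ l' + j = l := fun l hl =>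
    ⟨fun hdvd => by linarith [Int.eq_zero_of_abs_lt_dvd hdvd (hS l hl l' hl')],
      fun h => by simp [← h]⟩
  rw [sum_congr rfl fun l hl => if_congr (hiff l hl) rfl rfl, sum_ite_eq]

lemma sum_filter_add_mem_Icc_half {β : Type*} [AddCommMonoid β] {N : ℕ} (hN : Even N) {m : ℕ}
    (hm : m < N) (f : ℤ → β) :
    ∑ l ∈ Icc (-((N : ℤ) / 2)) ((N : ℤ) / 2 - 1) with
        l + ((N : ℤ) - 1 - m) ∈ Icc (-((N : ℤ) / 2)) ((N : ℤ) / 2 - 1), f l =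
      ∑ i ∈ range (m + 1), f (-((N : ℤ) / 2) + i) := by
  obtain ⟨n, rfl⟩ := hN
  rw [← Int.sum_Ico_add_natCast]
  congr 1
  ext l
  simp only [mem_filter, mem_Icc, mem_Ico]
  omega

/-- For even `N`, with `F` the zero-padded `(2N-1)`-point DFT of `a` and
`b j` the `j`-th discrete Fourier coefficient of `|F|²`, for every `0 ≤ m ≤ N-1` one has
`b (N-1-m) = ∑_{i=0}^{m} conj (a (-N/2+i)) · a (N/2-1-m+i)`; in particular
`b (N-1) = conj (a (-N/2)) · a (N/2-1)`.  (This is the matrix equation `𝒜·ā = b⃗`, read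
row by row, where `𝒜` is the lower-triangular Toeplitz matrix built from `conj ∘ a`.) -/
theorem dft_autocorrelation_triangular_system (N : ℕ) (hN : Even N) (a F b : ℤ → ℂ)
    (hF : ∀ k : ℤ, F k = ∑ l ∈ Finset.Icc (-((N : ℤ) / 2)) ((N : ℤ) / 2 - 1),
        a l * Complex.exp (2 * (Real.pi : ℂ) * Complex.I * (l : ℂ) * (k : ℂ) / (2 * (N : ℂ) - 1)))
    (hb : ∀ j : ℤ, b j = (1 / (2 * (N : ℂ) - 1)) *
        ∑ k ∈ Finset.Icc (-((N : ℤ) - 1)) ((N : ℤ) - 1),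
          (‖F k‖ : ℂ) ^ 2 *
            Complex.exp (-(2 * (Real.pi : ℂ) * Complex.I * (j : ℂ) * (k : ℂ)) / (2 * (N : ℂ) - 1))) :
    (∀ m : ℕ, m < N →
        b ((N : ℤ) - 1 - m) = ∑ i ∈ Finset.range (m + 1),
          (starRingEnd ℂ) (a (-((N : ℤ) / 2) + i)) * a ((N : ℤ) / 2 - 1 - m + i)) ∧
      (0 < N → b ((N : ℤ) - 1) = (starRingEnd ℂ) (a (-((N : ℤ) / 2))) * a ((N : ℤ) / 2 - 1)) := by
  have key : ∀ m : ℕ, m < N → b ((N : ℤ) - 1 - m) = ∑ i ∈ Finset.range (m + 1),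
      (starRingEnd ℂ) (a (-((N : ℤ) / 2) + i)) * a ((N : ℤ) / 2 - 1 - m + i) := by
    intro m hm
    set S := Icc (-((N : ℤ) / 2)) ((N : ℤ) / 2 - 1)
    have hM : 2 * N - 1 ≠ 0 := by omega
    have hcast : 2 * (N : ℂ) - 1 = ((2 * N - 1 : ℕ) : ℂ) := by
      push_cast [Nat.cast_sub (by omega : 1 ≤ 2 * N)]
      ring
    have hwindow : Icc (-((N : ℤ) - 1)) ((N : ℤ) - 1) =
        Ico (-((N : ℤ) - 1)) (-((N : ℤ) - 1) + (2 * N - 1 : ℕ)) := by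
      ext k; simp only [mem_Icc, mem_Ico]; omega
    have hdiff : ∀ l ∈ S, ∀ l' ∈ S, |l - l' - ((N : ℤ) - 1 - m)| < (2 * N - 1 : ℕ) := by
      intro l hl l' hl'
      simp only [S, mem_Icc] at hl hl'
      rw [abs_lt]; omega
    have hFdft : F = dft (2 * N - 1) S a := funext fun k => by rw [hF, hcast, dft]
    rw [hb, hFdft, hwindow, hcast, one_div_mul_sum_sq_norm_dft_mul_exp hM,
      sum_sum_ite_dvd_sub_sub_eq_sum_filter S _ hdiff, sum_filter_add_mem_Icc_half hN hm]
    obtain ⟨n, rfl⟩ := hN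
    refine sum_congr rfl fun i _ => ?_
    rw [mul_comm]; congr 2; omega
  exact ⟨key, fun hN₀ => by simpa using key 0 hN₀⟩
end
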